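/- Let K > 0 and α ∈ ℝ with |α| < 2K/|1-K²| (interpreting the condition as vacuous if K = 1). Then the map S(z) = ((K+1)/2 · z + (K-1)/2 · conj(z))·|z|^{iα} (with S(0)=0, where |z|^{iα} = exp(iα·log|z|)) is injective on ℂ. -/

import Mathlib

open Complex

private lemma D_pos {K : ℝ} (hK : 0 < K) (x : ℝ) :
    0 < Real.cos x ^ 2 + K ^ 2 * Real.sin x ^ 2 := by
  have h := Real.sin_sq_add_cos_sq x
  rcases le_total 1 K with hk | hk
  · have h2 : (0:ℝ) ≤ (K ^ 2 - 1) * Real.sin x ^ 2 :=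
      mul_nonneg (by nlinarith) (sq_nonneg _)
    nlinarith
  · have h2 : (0:ℝ) ≤ (1 - K ^ 2) * Real.cos x ^ 2 :=
      mul_nonneg (by nlinarith) (sq_nonneg _)
    nlinarith [pow_pos hK 2]

private lemma log_D_lip {K : ℝ} (hK : 0 < K) (a b : ℝ) :
    |Real.log (Real.cos a ^ 2 + K ^ 2 * Real.sin a ^ 2) -
      Real.log (Real.cos b ^ 2 + K ^ 2 * Real.sin b ^ 2)| ≤ (|1 - K ^ 2| / K) * |a - b| := by
  set g : ℝ → ℝ := fun x => Real.log (Real.cos x ^ 2 + K ^ 2 * Real.sin x ^ 2) with hg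
  set g' : ℝ → ℝ := fun x => (2 * Real.sin x * Real.cos x * (K ^ 2 - 1)) /
      (Real.cos x ^ 2 + K ^ 2 * Real.sin x ^ 2) with hg'
  have hd : ∀ x : ℝ, HasDerivAt g (g' x) x := by
    intro x
    have h1 : HasDerivAt (fun x : ℝ => Real.cos x ^ 2 + K ^ 2 * Real.sin x ^ 2)
        (2 * Real.sin x * Real.cos x * (K ^ 2 - 1)) x := by
      have hc := (Real.hasDerivAt_cos x).pow 2
      have hs := ((Real.hasDerivAt_sin x).pow 2).const_mul (K ^ 2)
      refine (hc.add hs).congr_deriv ?_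
      norm_num
      ring
    have := h1.log (D_pos hK x).ne'
    simpa [hg, hg'] using this
  have hbound : ∀ x : ℝ, ‖g' x‖ ≤ |1 - K ^ 2| / K := by
    intro x
    have hD := D_pos hK x
    rw [Real.norm_eq_abs, hg', abs_div, abs_of_pos hD, div_le_div_iff₀ hD hK]
    have h1 : |2 * Real.sin x * Real.cos x * (K ^ 2 - 1)| =
        2 * |Real.sin x| * |Real.cos x| * |1 - K ^ 2| := by
      rw [abs_mul, abs_mul, abs_mul, abs_sub_comm]
      simp [abs_of_nonneg]
    rw [h1]
    have h3 : 2 * K * (|Real.sin x| * |Real.cos x|) ≤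
        Real.cos x ^ 2 + K ^ 2 * Real.sin x ^ 2 := by
      nlinarith [sq_nonneg (|Real.cos x| - K * |Real.sin x|), _root_.sq_abs (Real.sin x),
        _root_.sq_abs (Real.cos x)]
    have h4 := mul_le_mul_of_nonneg_left h3 (abs_nonneg (1 - K ^ 2))
    nlinarith [h4]
  have := convex_univ.norm_image_sub_le_of_norm_hasDerivWithin_le
    (f := g) (f' := g') (fun x _ => (hd x).hasDerivWithinAt)
    (fun x _ => hbound x) (Set.mem_univ b) (Set.mem_univ a)
  simpa [Real.norm_eq_abs, hg] using this

private lemma abs_one_sub_sq_pos {K : ℝ} (hK : 0 < K) (hK1 : K ≠ 1) : 0 < |1 - K ^ 2| := by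
  apply abs_pos.mpr
  intro hc
  apply hK1
  nlinarith

set_option maxHeartbeats 1000000 in
theorem stmt_2 (K α : ℝ) (hK : 0 < K) (hα : K ≠ 1 → |α| < 2 * K / |1 - K ^ 2|)
    (S : ℂ → ℂ) (hS0 : S 0 = 0)
    (hS : ∀ z : ℂ, z ≠ 0 → S z =
      (((K + 1) / 2 : ℂ) * z + ((K - 1) / 2 : ℂ) * (starRingEnd ℂ) z) *
        Complex.exp ((α : ℂ) * (Real.log (‖z‖) : ℂ) * Complex.I)) :
    Function.Injective S := by
  have hK0 : (K : ℝ) ≠ 0 := hK.ne'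
  set w : ℂ → ℂ := fun z => ((K + 1) / 2 : ℂ) * z + ((K - 1) / 2 : ℂ) * (starRingEnd ℂ) z
    with hw
  have hwre : ∀ z : ℂ, (w z).re = K * z.re := by
    intro z
    simp only [hw, Complex.add_re, Complex.mul_re, Complex.div_re, Complex.add_im,
      Complex.conj_re, Complex.conj_im, Complex.sub_re, Complex.sub_im, Complex.one_re,
      Complex.one_im, Complex.ofReal_re, Complex.ofReal_im]
    norm_num
    ring
  have hwim : ∀ z : ℂ, (w z).im = z.im := by
    intro z
    simp only [hw, Complex.add_im, Complex.mul_im, Complex.div_re, Complex.div_im,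
      Complex.add_re, Complex.conj_re, Complex.conj_im, Complex.sub_re, Complex.sub_im,
      Complex.one_re, Complex.one_im, Complex.ofReal_re, Complex.ofReal_im]
    norm_num
    ring
  have hwne : ∀ z : ℂ, z ≠ 0 → w z ≠ 0 := by
    intro z hz h0
    apply hz
    have h1 : (w z).re = 0 := by rw [h0]; simp
    have h2 : (w z).im = 0 := by rw [h0]; simp
    rw [hwre] at h1
    rw [hwim] at h2
    have hre0 : z.re = 0 := by
      rcases mul_eq_zero.mp h1 with h | h
      · exact absurd h hK0
      · exact h
    exact Complex.ext (by simpa using hre0) (by simpa using h2)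
  have hwinj : ∀ z₁ z₂ : ℂ, w z₁ = w z₂ → z₁ = z₂ := by
    intro z₁ z₂ h
    have h1 : K * z₁.re = K * z₂.re := by rw [← hwre z₁, ← hwre z₂, h]
    have h2 : z₁.im = z₂.im := by rw [← hwim z₁, ← hwim z₂, h]
    exact Complex.ext (mul_left_cancel₀ hK0 h1) h2
  have hP : ∀ z : ℂ, (w z).re ^ 2 + K ^ 2 * (w z).im ^ 2 = K ^ 2 * ‖z‖ ^ 2 := by
    intro z
    rw [hwre, hwim, Complex.sq_norm, Complex.normSq_apply]
    ring
  -- S z ≠ 0 for z ≠ 0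
  have hSne : ∀ z : ℂ, z ≠ 0 → S z ≠ 0 := by
    intro z hz
    rw [hS z hz]
    exact mul_ne_zero (hwne z hz) (Complex.exp_ne_zero _)
  intro z₁ z₂ h
  by_cases h1 : z₁ = 0
  · by_cases h2 : z₂ = 0
    · rw [h1, h2]
    · exact absurd h.symm (by rw [h1, hS0]; exact hSne z₂ h2)
  · by_cases h2 : z₂ = 0
    · exact absurd h (by rw [h2, hS0]; exact hSne z₁ h1)
    · -- main case
      set t₁ := ‖z₁‖ with ht₁
      set t₂ := ‖z₂‖ with ht₂
      have ht₁0 : 0 < t₁ := norm_pos_iff.mpr h1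
      have ht₂0 : 0 < t₂ := norm_pos_iff.mpr h2
      set φ₁ : ℝ := α * Real.log t₁ with hφ₁
      set φ₂ : ℝ := α * Real.log t₂ with hφ₂
      have heq : w z₁ * Complex.exp ((φ₁ : ℂ) * Complex.I)
          = w z₂ * Complex.exp ((φ₂ : ℂ) * Complex.I) := by
        have a1 : (α : ℂ) * (Real.log (‖z₁‖) : ℂ) * Complex.I
            = ((φ₁ : ℝ) : ℂ) * Complex.I := by push_cast [hφ₁, ht₁]; ring
        have a2 : (α : ℂ) * (Real.log (‖z₂‖) : ℂ) * Complex.I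
            = ((φ₂ : ℝ) : ℂ) * Complex.I := by push_cast [hφ₂, ht₂]; ring
        rw [hS z₁ h1, hS z₂ h2, a1, a2] at h
        exact h
      set δ : ℝ := φ₂ - φ₁ with hδ
      have heq2 : w z₁ = w z₂ * Complex.exp ((δ : ℂ) * Complex.I) := by
        have hE : Complex.exp ((φ₁ : ℂ) * Complex.I) ≠ 0 := Complex.exp_ne_zero _
        have hsplit : Complex.exp ((φ₂ : ℂ) * Complex.I)
            = Complex.exp ((δ : ℂ) * Complex.I) * Complex.exp ((φ₁ : ℂ) * Complex.I) := by
          rw [← Complex.exp_add]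
          congr 1
          push_cast [hδ]
          ring
        apply mul_right_cancel₀ hE
        rw [heq, hsplit]
        ring
      set r : ℝ := ‖w z₂‖ with hr
      have hr0 : 0 < r := norm_pos_iff.mpr (hwne z₂ h2)
      set θ : ℝ := Complex.arg (w z₂) with hθ
      have hpolar : ∀ d : ℝ, w z₂ * Complex.exp ((d : ℂ) * Complex.I)
          = (r : ℂ) * Complex.exp (((θ + d : ℝ) : ℂ) * Complex.I) := by
        intro d
        rw [show (((θ + d : ℝ)) : ℂ) * Complex.I
            = (θ : ℂ) * Complex.I + (d : ℂ) * Complex.I by push_cast; ring,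
          Complex.exp_add, ← mul_assoc]
        congr 1
        rw [hr, hθ]
        exact (Complex.norm_mul_exp_arg_mul_I (w z₂)).symm
      have hre : ∀ d : ℝ, (w z₂ * Complex.exp ((d : ℂ) * Complex.I)).re
          = r * Real.cos (θ + d) := by
        intro d
        rw [hpolar d, Complex.re_ofReal_mul, Complex.exp_ofReal_mul_I_re]
      have him : ∀ d : ℝ, (w z₂ * Complex.exp ((d : ℂ) * Complex.I)).im
          = r * Real.sin (θ + d) := by
        intro d
        rw [hpolar d, Complex.im_ofReal_mul, Complex.exp_ofReal_mul_I_im]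
      have key : ∀ d : ℝ, (w z₂ * Complex.exp ((d : ℂ) * Complex.I)).re ^ 2
          + K ^ 2 * (w z₂ * Complex.exp ((d : ℂ) * Complex.I)).im ^ 2
          = r ^ 2 * (Real.cos (θ + d) ^ 2 + K ^ 2 * Real.sin (θ + d) ^ 2) := by
        intro d
        rw [hre d, him d]
        ring
      have eq1 : K ^ 2 * t₁ ^ 2
          = r ^ 2 * (Real.cos (θ + δ) ^ 2 + K ^ 2 * Real.sin (θ + δ) ^ 2) := by
        rw [← key δ, ← heq2, hP z₁]
      have eq2 : K ^ 2 * t₂ ^ 2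
          = r ^ 2 * (Real.cos θ ^ 2 + K ^ 2 * Real.sin θ ^ 2) := by
        have := key 0
        simp only [Complex.ofReal_zero, zero_mul, Complex.exp_zero, mul_one, add_zero] at this
        rw [← this, hP z₂]
      -- take logs
      have hD1 := D_pos hK (θ + δ)
      have hD2 := D_pos hK θ
      have hlog1 : 2 * Real.log K + 2 * Real.log t₁
          = 2 * Real.log r + Real.log (Real.cos (θ + δ) ^ 2 + K ^ 2 * Real.sin (θ + δ) ^ 2) := by
        have := congrArg Real.log eq1
        rw [Real.log_mul (by positivity) (by positivity),
            Real.log_mul (by positivity) hD1.ne'] at this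
        simp only [Real.log_pow] at this
        push_cast at this
        linarith
      have hlog2 : 2 * Real.log K + 2 * Real.log t₂
          = 2 * Real.log r + Real.log (Real.cos θ ^ 2 + K ^ 2 * Real.sin θ ^ 2) := by
        have := congrArg Real.log eq2
        rw [Real.log_mul (by positivity) (by positivity),
            Real.log_mul (by positivity) hD2.ne'] at this
        simp only [Real.log_pow] at this
        push_cast at this
        linarith
      set u : ℝ := Real.log t₁ - Real.log t₂ with hu
      have hmain : 2 * u = Real.log (Real.cos (θ + δ) ^ 2 + K ^ 2 * Real.sin (θ + δ) ^ 2)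
          - Real.log (Real.cos θ ^ 2 + K ^ 2 * Real.sin θ ^ 2) := by
        rw [hu]; linarith
      have hδu : δ = -(α * u) := by rw [hδ, hφ₁, hφ₂, hu]; ring
      have hlip := log_D_lip hK (θ + δ) θ
      have habs : 2 * |u| ≤ (|1 - K ^ 2| / K) * (|α| * |u|) := by
        calc 2 * |u| = |2 * u| := by rw [abs_mul]; simp
          _ ≤ (|1 - K ^ 2| / K) * |θ + δ - θ| := by rw [hmain]; exact hlip
          _ = (|1 - K ^ 2| / K) * (|α| * |u|) := by
              rw [show θ + δ - θ = δ by ring, hδu, abs_neg, abs_mul]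
      have hu0 : u = 0 := by
        by_contra hu0
        have hupos : 0 < |u| := abs_pos.mpr hu0
        have h2le : 2 ≤ (|1 - K ^ 2| / K) * |α| := by
          rw [← mul_le_mul_iff_of_pos_right hupos]
          calc 2 * |u| ≤ (|1 - K ^ 2| / K) * (|α| * |u|) := habs
            _ = (|1 - K ^ 2| / K) * |α| * |u| := by ring
        by_cases hK1 : K = 1
        · rw [hK1] at h2le; norm_num at h2le
        · have hαlt := hα hK1
          have hKsq : 0 < |1 - K ^ 2| := abs_one_sub_sq_pos hK hK1
          rw [lt_div_iff₀ hKsq] at hαlt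
          have : (|1 - K ^ 2| / K) * |α| < 2 := by
            rw [div_mul_eq_mul_div, div_lt_iff₀ hK]
            nlinarith [abs_nonneg α]
          linarith
      have ht : t₁ = t₂ := by
        have : Real.log t₁ = Real.log t₂ := by
          have := hu0; rw [hu] at this; linarith
        calc t₁ = Real.exp (Real.log t₁) := (Real.exp_log ht₁0).symm
          _ = Real.exp (Real.log t₂) := by rw [this]
          _ = t₂ := Real.exp_log ht₂0
      have hφ : φ₁ = φ₂ := by rw [hφ₁, hφ₂, ht]
      apply hwinj
      have hE : Complex.exp ((φ₁ : ℂ) * Complex.I) ≠ 0 := Complex.exp_ne_zero _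
      rw [hφ] at heq
      exact mul_right_cancel₀ (Complex.exp_ne_zero _) heq
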